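/- Let G be a topological group equipped with a bi-invariant metric, i.e. dist(g·a, g·b) = dist(a, b) = dist(a·g, b·g) for all a, b, g ∈ G. Let g, h : [0,1] → G be continuous paths with g(0) = h(0) = 1. Define the path c : [0,1] → G by c(t) = h(1−3t)·h(1)⁻¹ for t ∈ [0, 1/3], c(t) = g(3t−1)·h(1)⁻¹ for t ∈ [1/3, 2/3], and c(t) = h(3t−2)·g(1)·h(1)⁻¹ for t ∈ [2/3, 1]. Then A(c) = A(g). -/

import Mathlib

open Set
open scoped ENNReal

/-- Two maps `[0,1] → G` are homotopic relatively to the endpoints `{0, 1}`. -/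
def HomotopicRelEndpoints {G : Type*} [TopologicalSpace G] (p q : ℝ → G) : Prop :=
  ∃ H : ℝ × ℝ → G, ContinuousOn H (Set.Icc 0 1 ×ˢ Set.Icc 0 1) ∧
    (∀ t ∈ Set.Icc (0:ℝ) 1, H (0, t) = p t) ∧
    (∀ t ∈ Set.Icc (0:ℝ) 1, H (1, t) = q t) ∧
    (∀ s ∈ Set.Icc (0:ℝ) 1, H (s, 0) = p 0) ∧
    (∀ s ∈ Set.Icc (0:ℝ) 1, H (s, 1) = p 1)

/-- The amplitude of a path `p : [0,1] → G` in a metric group `G`: the infimum of the total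
variations (lengths) of continuous paths with the same endpoints that are homotopic to `p`
relatively to `{0, 1}`. -/
noncomputable def amplitude {G : Type*} [MetricSpace G] (p : ℝ → G) : ℝ≥0∞ :=
  ⨅ (q : ℝ → G) (_ : ContinuousOn q (Set.Icc 0 1)) (_ : q 0 = p 0) (_ : q 1 = p 1)
    (_ : HomotopicRelEndpoints p q), eVariationOn q (Set.Icc 0 1)

/-!
Put `F(s, t) = h(s) g(t) h(1)⁻¹` on the unit square. The path `c` is `F` followed along three
sides of the square, from `(1,0)` to `(0,0)` to `(0,1)` to `(1,1)`, while `t ↦ F(1, t)` is the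
conjugate `h(1) g(t) h(1)⁻¹` of `g`, followed along the fourth side. The square is convex, so the
straight-line homotopy between the two parametrisations shows that `c` is homotopic to the
conjugate of `g` relative to the endpoints, hence has the same amplitude. Bi-invariance of the
metric makes conjugation by `h(1)` an isometry, and amplitude is invariant under isometries.
-/

namespace HomotopicRelEndpoints

variable {X : Type*} [TopologicalSpace X] {p q r : ℝ → X}

theorem apply_zero_eq (hpq : HomotopicRelEndpoints p q) : q 0 = p 0 := by
  obtain ⟨H, -, -, hH1, hHs0, -⟩ := hpq
  rw [← hH1 0 (left_mem_Icc.2 zero_le_one), hHs0 1 (right_mem_Icc.2 zero_le_one)]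

theorem apply_one_eq (hpq : HomotopicRelEndpoints p q) : q 1 = p 1 := by
  obtain ⟨H, -, -, hH1, -, hHs1⟩ := hpq
  rw [← hH1 1 (right_mem_Icc.2 zero_le_one), hHs1 1 (right_mem_Icc.2 zero_le_one)]

theorem symm (hpq : HomotopicRelEndpoints p q) : HomotopicRelEndpoints q p := by
  have hq0 := hpq.apply_zero_eq
  have hq1 := hpq.apply_one_eq
  obtain ⟨H, hHc, hH0, hH1, hHs0, hHs1⟩ := hpq
  have hflip : MapsTo (fun x : ℝ × ℝ => (1 - x.1, x.2)) (Icc 0 1 ×ˢ Icc 0 1)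
      (Icc 0 1 ×ˢ Icc 0 1) := fun x ⟨⟨hs0, hs1⟩, ht⟩ => ⟨⟨by linarith, by linarith⟩, ht⟩
  refine ⟨fun x => H (1 - x.1, x.2), hHc.comp (by fun_prop) hflip, ?_, ?_, ?_, ?_⟩ <;>
    intro u hu
  · simpa using hH1 u hu
  · simpa using hH0 u hu
  · show H (1 - u, 0) = q 0
    rw [hHs0 _ ⟨by linarith [hu.2], by linarith [hu.1]⟩, hq0]
  · show H (1 - u, 1) = q 1
    rw [hHs1 _ ⟨by linarith [hu.2], by linarith [hu.1]⟩, hq1]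

theorem trans (hpq : HomotopicRelEndpoints p q) (hqr : HomotopicRelEndpoints q r) :
    HomotopicRelEndpoints p r := by
  have hq0 := hpq.apply_zero_eq
  have hq1 := hpq.apply_one_eq
  obtain ⟨H₁, hH₁c, hH₁0, hH₁1, hH₁s0, hH₁s1⟩ := hpq
  obtain ⟨H₂, hH₂c, hH₂0, hH₂1, hH₂s0, hH₂s1⟩ := hqr
  set K : ℝ × ℝ → X := fun x =>
    if x.1 ≤ 1 / 2 then H₁ (2 * x.1, x.2) else H₂ (2 * x.1 - 1, x.2) with hK
  have hsplit : Icc (0:ℝ) 1 ×ˢ Icc (0:ℝ) 1 =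
      Icc 0 (1 / 2) ×ˢ Icc 0 1 ∪ Icc (1 / 2) 1 ×ˢ Icc 0 1 := by
    rw [← union_prod, Icc_union_Icc_eq_Icc (by norm_num) (by norm_num)]
  have hK₁ : ContinuousOn K (Icc 0 (1 / 2) ×ˢ Icc 0 1) := by
    have hmaps : MapsTo (fun x : ℝ × ℝ => (2 * x.1, x.2)) (Icc 0 (1 / 2) ×ˢ Icc 0 1)
        (Icc 0 1 ×ˢ Icc 0 1) := fun x ⟨⟨hs0, hs1⟩, ht⟩ => ⟨⟨by linarith, by linarith⟩, ht⟩
    exact (hH₁c.comp (by fun_prop) hmaps).congr fun x ⟨⟨_, hs⟩, _⟩ => if_pos hs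
  have hK₂ : ContinuousOn K (Icc (1 / 2) 1 ×ˢ Icc 0 1) := by
    have hmaps : MapsTo (fun x : ℝ × ℝ => (2 * x.1 - 1, x.2)) (Icc (1 / 2) 1 ×ˢ Icc 0 1)
        (Icc 0 1 ×ˢ Icc 0 1) := fun x ⟨⟨hs0, hs1⟩, ht⟩ => ⟨⟨by linarith, by linarith⟩, ht⟩
    refine (hH₂c.comp (by fun_prop) hmaps).congr fun x ⟨⟨hs0, _⟩, ht⟩ => ?_
    simp only [hK, Function.comp]
    split_ifs with hs
    · rw [show x.1 = 1 / 2 by linarith]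
      norm_num [hH₁1 _ ht, hH₂0 _ ht]
    · rfl
  refine ⟨K, hsplit ▸ hK₁.union_of_isClosed hK₂ (isClosed_Icc.prod isClosed_Icc)
    (isClosed_Icc.prod isClosed_Icc), fun t ht => ?_, fun t ht => ?_, fun s hs => ?_,
    fun s hs => ?_⟩
  · simp [hK, hH₁0 t ht]
  · norm_num [hK, hH₂1 t ht]
  · simp only [hK]
    split_ifs with hs'
    · exact hH₁s0 _ ⟨by linarith [hs.1], by linarith⟩
    · rw [hH₂s0 _ ⟨by linarith, by linarith [hs.2]⟩, hq0]
  · simp only [hK]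
    split_ifs with hs'
    · exact hH₁s1 _ ⟨by linarith [hs.1], by linarith⟩
    · rw [hH₂s1 _ ⟨by linarith, by linarith [hs.2]⟩, hq1]

theorem map {Y : Type*} [TopologicalSpace Y] (hpq : HomotopicRelEndpoints p q) {f : X → Y}
    (hf : Continuous f) : HomotopicRelEndpoints (f ∘ p) (f ∘ q) := by
  obtain ⟨H, hHc, hH0, hH1, hHs0, hHs1⟩ := hpq
  exact ⟨f ∘ H, hf.comp_continuousOn hHc, fun t ht => congrArg f (hH0 t ht),
    fun t ht => congrArg f (hH1 t ht), fun s hs => congrArg f (hHs0 s hs),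
    fun s hs => congrArg f (hHs1 s hs)⟩

theorem congr_left {p' : ℝ → X} (hpq : HomotopicRelEndpoints p q) (hp : EqOn p p' (Icc 0 1)) :
    HomotopicRelEndpoints p' q := by
  obtain ⟨H, hHc, hH0, hH1, hHs0, hHs1⟩ := hpq
  refine ⟨H, hHc, fun t ht => (hH0 t ht).trans (hp ht), hH1, fun s hs => ?_, fun s hs => ?_⟩
  · rw [hHs0 s hs, hp (left_mem_Icc.2 zero_le_one)]
  · rw [hHs1 s hs, hp (right_mem_Icc.2 zero_le_one)]

end HomotopicRelEndpoints

theorem homotopicRelEndpoints_comp_of_convex {E X : Type*} [AddCommGroup E] [Module ℝ E]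
    [TopologicalSpace E] [ContinuousAdd E] [ContinuousSMul ℝ E] [TopologicalSpace X]
    {S : Set E} (hS : Convex ℝ S) {F : E → X} (hF : ContinuousOn F S) {γ₀ γ₁ : ℝ → E}
    (hγ₀ : ContinuousOn γ₀ (Icc 0 1)) (hγ₁ : ContinuousOn γ₁ (Icc 0 1))
    (hγ₀S : MapsTo γ₀ (Icc 0 1) S) (hγ₁S : MapsTo γ₁ (Icc 0 1) S)
    (h0 : γ₀ 0 = γ₁ 0) (h1 : γ₀ 1 = γ₁ 1) :
    HomotopicRelEndpoints (F ∘ γ₀) (F ∘ γ₁) := by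
  set L : ℝ × ℝ → E := fun x => (1 - x.1) • γ₀ x.2 + x.1 • γ₁ x.2
  have hL : ContinuousOn L (Icc 0 1 ×ˢ Icc 0 1) :=
    ((continuousOn_const.sub continuousOn_fst).smul (hγ₀.comp continuousOn_snd
      fun x hx => hx.2)).add (continuousOn_fst.smul (hγ₁.comp continuousOn_snd fun x hx => hx.2))
  have hLS : MapsTo L (Icc 0 1 ×ˢ Icc 0 1) S := fun x ⟨⟨hs0, hs1⟩, ht⟩ =>
    hS (hγ₀S ht) (hγ₁S ht) (by linarith) hs0 (by ring)
  have hconst : ∀ (s : ℝ) (a : E), (1 - s) • a + s • a = a := fun s a => by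
    rw [← add_smul, sub_add_cancel, one_smul]
  refine ⟨F ∘ L, hF.comp hL hLS, fun t _ => ?_, fun t _ => ?_, fun s _ => ?_, fun s _ => ?_⟩
  · simp [L]
  · simp [L]
  · simp only [Function.comp, L, ← h0, hconst]
  · simp only [Function.comp, L, ← h1, hconst]

theorem amplitude_le {X : Type*} [MetricSpace X] {p q : ℝ → X} (hq : ContinuousOn q (Icc 0 1))
    (h0 : q 0 = p 0) (h1 : q 1 = p 1) (hpq : HomotopicRelEndpoints p q) :
    amplitude p ≤ eVariationOn q (Icc 0 1) :=
  iInf_le_of_le q <| iInf_le_of_le hq <| iInf_le_of_le h0 <| iInf_le_of_le h1 <|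
    iInf_le_of_le hpq le_rfl

theorem le_amplitude {X : Type*} [MetricSpace X] {p : ℝ → X} {a : ℝ≥0∞}
    (h : ∀ q : ℝ → X, ContinuousOn q (Icc 0 1) → q 0 = p 0 → q 1 = p 1 →
      HomotopicRelEndpoints p q → a ≤ eVariationOn q (Icc 0 1)) :
    a ≤ amplitude p := by
  simpa only [amplitude, le_iInf_iff] using h

theorem amplitude_congr_of_homotopicRelEndpoints {X : Type*} [MetricSpace X] {p p' : ℝ → X}
    (hpp' : HomotopicRelEndpoints p p') : amplitude p = amplitude p' := by
  suffices key : ∀ p p' : ℝ → X, HomotopicRelEndpoints p p' → amplitude p ≤ amplitude p' from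
    le_antisymm (key p p' hpp') (key p' p hpp'.symm)
  intro p p' hpp'
  exact le_amplitude fun q hq h0 h1 hp'q => amplitude_le hq (h0.trans hpp'.apply_zero_eq)
    (h1.trans hpp'.apply_one_eq) (hpp'.trans hp'q)

theorem amplitude_comp_le_of_lipschitzWith_one {X Y : Type*} [MetricSpace X] [MetricSpace Y]
    {f : X → Y} (hf : LipschitzWith 1 f) (p : ℝ → X) : amplitude (f ∘ p) ≤ amplitude p :=
  le_amplitude fun q hq h0 h1 hpq =>
    calc amplitude (f ∘ p) ≤ eVariationOn (f ∘ q) (Icc 0 1) :=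
          amplitude_le (hf.continuous.comp_continuousOn hq) (congrArg f h0) (congrArg f h1)
            (hpq.map hf.continuous)
      _ ≤ eVariationOn q (Icc 0 1) := by
          simpa using hf.lipschitzOnWith.comp_eVariationOn_le (mapsTo_univ q (Icc 0 1))

theorem IsometryEquiv.amplitude_comp {X Y : Type*} [MetricSpace X] [MetricSpace Y]
    (e : X ≃ᵢ Y) (p : ℝ → X) : amplitude (e ∘ p) = amplitude p := by
  refine le_antisymm (amplitude_comp_le_of_lipschitzWith_one e.isometry.lipschitz p) ?_
  simpa [Function.comp_def] using
    amplitude_comp_le_of_lipschitzWith_one e.symm.isometry.lipschitz (e ∘ p)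

theorem isometry_conj {G : Type*} [Group G] [MetricSpace G]
    (hleft : ∀ a b g : G, dist (g * a) (g * b) = dist a b)
    (hright : ∀ a b g : G, dist (a * g) (b * g) = dist a b) (a : G) :
    Isometry (MulAut.conj a) :=
  Isometry.of_dist_eq fun x y => by rw [MulAut.conj_apply, MulAut.conj_apply, hright, hleft]

def threeSidesOfSquare (t : ℝ) : ℝ × ℝ :=
  (max 0 (max (1 - 3 * t) (3 * t - 2)), max 0 (min 1 (3 * t - 1)))

theorem continuous_threeSidesOfSquare : Continuous threeSidesOfSquare := by
  unfold threeSidesOfSquare; fun_prop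

theorem mapsTo_threeSidesOfSquare :
    MapsTo threeSidesOfSquare (Icc 0 1) (Icc 0 1 ×ˢ Icc 0 1) := fun t ⟨ht0, ht1⟩ =>
  ⟨⟨le_max_left _ _, max_le zero_le_one (max_le (by linarith) (by linarith))⟩,
    ⟨le_max_left _ _, max_le zero_le_one (min_le_left _ _)⟩⟩

theorem threeSidesOfSquare_of_le_one_third {t : ℝ} (ht : t ≤ 1 / 3) :
    threeSidesOfSquare t = (1 - 3 * t, 0) := by
  simp only [threeSidesOfSquare, Prod.mk.injEq]
  constructor
  · rw [max_eq_left (by linarith : 3 * t - 2 ≤ 1 - 3 * t), max_eq_right (by linarith)]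
  · rw [min_eq_right (by linarith), max_eq_left (by linarith)]

theorem threeSidesOfSquare_of_mem_Icc {t : ℝ} (ht : t ∈ Icc (1 / 3) (2 / 3)) :
    threeSidesOfSquare t = (0, 3 * t - 1) := by
  obtain ⟨ht1, ht2⟩ := ht
  simp only [threeSidesOfSquare, Prod.mk.injEq]
  constructor
  · rw [max_eq_left (max_le (by linarith) (by linarith))]
  · rw [min_eq_right (by linarith), max_eq_right (by linarith)]

theorem threeSidesOfSquare_of_two_thirds_le {t : ℝ} (ht : 2 / 3 ≤ t) :
    threeSidesOfSquare t = (3 * t - 2, 1) := by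
  simp only [threeSidesOfSquare, Prod.mk.injEq]
  constructor
  · rw [max_eq_right (by linarith : 1 - 3 * t ≤ 3 * t - 2), max_eq_right (by linarith)]
  · rw [min_eq_left (by linarith), max_eq_right (by linarith)]

/-- In a topological group `G` with a bi-invariant metric, the amplitude of the
conjugated path `c` (going backwards along `h`, then along `g`, then along `h`, all right
translated by `h(1)⁻¹`) equals the amplitude of `g`. -/
theorem amplitude_conjugate_eq
    {G : Type*} [Group G] [MetricSpace G] [IsTopologicalGroup G]
    (hleft : ∀ a b g : G, dist (g * a) (g * b) = dist a b)
    (hright : ∀ a b g : G, dist (a * g) (b * g) = dist a b)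
    (g h : ℝ → G)
    (hg : ContinuousOn g (Set.Icc 0 1)) (hh : ContinuousOn h (Set.Icc 0 1))
    (hg0 : g 0 = 1) (hh0 : h 0 = 1)
    (c : ℝ → G)
    (hc₁ : ∀ t ∈ Set.Icc (0:ℝ) (1/3), c t = h (1 - 3 * t) * (h 1)⁻¹)
    (hc₂ : ∀ t ∈ Set.Icc (1/3 : ℝ) (2/3), c t = g (3 * t - 1) * (h 1)⁻¹)
    (hc₃ : ∀ t ∈ Set.Icc (2/3 : ℝ) 1, c t = h (3 * t - 2) * g 1 * (h 1)⁻¹) :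
    amplitude c = amplitude g := by
  set F : ℝ × ℝ → G := fun x => h x.1 * g x.2 * (h 1)⁻¹
  have hF : ContinuousOn F (Icc 0 1 ×ˢ Icc 0 1) :=
    ((hh.comp continuousOn_fst fun x hx => hx.1).mul
      (hg.comp continuousOn_snd fun x hx => hx.2)).mul continuousOn_const
  have hcF : EqOn (F ∘ threeSidesOfSquare) c (Icc 0 1) := by
    rintro t ⟨ht0, ht1⟩
    rcases le_total t (1 / 3) with ht | ht
    · simp [F, threeSidesOfSquare_of_le_one_third ht, hg0, hc₁ t ⟨ht0, ht⟩]
    rcases le_total t (2 / 3) with ht' | ht'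
    · simp [F, threeSidesOfSquare_of_mem_Icc ⟨ht, ht'⟩, hh0, hc₂ t ⟨ht, ht'⟩]
    · simp [F, threeSidesOfSquare_of_two_thirds_le ht', hc₃ t ⟨ht', ht1⟩]
  have hhom : HomotopicRelEndpoints c (F ∘ fun t => (1, t)) :=
    (homotopicRelEndpoints_comp_of_convex ((convex_Icc 0 1).prod (convex_Icc 0 1)) hF
      continuous_threeSidesOfSquare.continuousOn (by fun_prop) mapsTo_threeSidesOfSquare
      (fun t ht => ⟨right_mem_Icc.2 zero_le_one, ht⟩)
      (by norm_num [threeSidesOfSquare_of_le_one_third])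
      (by norm_num [threeSidesOfSquare_of_two_thirds_le])).congr_left hcF
  let e : G ≃ᵢ G := ⟨(MulAut.conj (h 1)).toEquiv, isometry_conj hleft hright (h 1)⟩
  calc amplitude c = amplitude (e ∘ g) := amplitude_congr_of_homotopicRelEndpoints hhom
    _ = amplitude g := e.amplitude_comp g
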